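/- arXiv:2211.14407 — 5 statements merged into one kernel-verified Lean document; each statement's English description precedes it below -/
import Mathlib

section
/- For each i ∈ [n], the function φ_i(v) = log(a_iᵀ(Σ_{j=1}^n v_j a_j a_jᵀ)⁻¹ a_i) is convex on the set of vectors v ∈ ℝ^n with strictly positive entries. -/
open Matrix Finset

private theorem quadForm_eq {n d : ℕ} (A : Matrix (Fin n) (Fin d) ℝ) (v : Fin n → ℝ)
    (x : Fin d → ℝ) :
    x ⬝ᵥ ((∑ j : Fin n, v j • vecMulVec (A j) (A j)) *ᵥ x)
      = ∑ j : Fin n, v j * (A j ⬝ᵥ x)^2 := by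
  have h1 : (∑ j : Fin n, v j • vecMulVec (A j) (A j)) *ᵥ x
      = ∑ j : Fin n, (v j * (A j ⬝ᵥ x)) • A j := by
    funext k
    simp only [mulVec, dotProduct, Matrix.sum_apply, Matrix.smul_apply, vecMulVec_apply,
      smul_eq_mul, Finset.sum_mul, Finset.mul_sum, Finset.sum_apply, Pi.smul_apply]
    rw [Finset.sum_comm]
    exact Finset.sum_congr rfl fun j _ => Finset.sum_congr rfl fun l _ => by ring
  rw [h1]
  simp only [dotProduct, Finset.sum_apply, Pi.smul_apply, smul_eq_mul, Finset.mul_sum, sq]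
  rw [Finset.sum_comm]
  refine Finset.sum_congr rfl fun j _ => ?_
  simp only [Finset.sum_mul, Finset.mul_sum]
  rw [Finset.sum_comm]
  exact Finset.sum_congr rfl fun k _ => Finset.sum_congr rfl fun l _ => by ring

private theorem mulVec_inj' {n d : ℕ} (A : Matrix (Fin n) (Fin d) ℝ) (hrank : A.rank = d)
    {x : Fin d → ℝ} (hx : x ≠ 0) : A *ᵥ x ≠ 0 := by
  have h := A.mulVecLin.finrank_range_add_finrank_ker
  rw [show Module.finrank ℝ (LinearMap.range A.mulVecLin) = A.rank from rfl, hrank] at h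
  simp only [Module.finrank_pi, Fintype.card_fin] at h
  have hker : LinearMap.ker A.mulVecLin = ⊥ := by
    have h0 : Module.finrank ℝ (LinearMap.ker A.mulVecLin) = 0 := by omega
    exact Submodule.finrank_eq_zero.mp h0
  intro hAx
  have hm : x ∈ LinearMap.ker A.mulVecLin := by simpa using hAx
  rw [hker] at hm
  exact hx (by simpa using hm)

private theorem Msymm {n d : ℕ} (A : Matrix (Fin n) (Fin d) ℝ) (v : Fin n → ℝ) :
    (∑ j : Fin n, v j • vecMulVec (A j) (A j)).IsSymm := by
  unfold Matrix.IsSymm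
  ext k l
  simp only [transpose_apply, Matrix.sum_apply, Matrix.smul_apply, vecMulVec_apply, smul_eq_mul]
  exact Finset.sum_congr rfl fun j _ => by ring

private theorem Mposdef {n d : ℕ} (A : Matrix (Fin n) (Fin d) ℝ) (hrank : A.rank = d)
    {v : Fin n → ℝ} (hv : ∀ j, 0 < v j) :
    (∑ j : Fin n, v j • vecMulVec (A j) (A j)).PosDef := by
  refine posDef_iff_dotProduct_mulVec.mpr ⟨?_, ?_⟩
  · rw [Matrix.IsHermitian, conjTranspose_eq_transpose_of_trivial]
    exact Msymm A v
  · intro x hx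
    rw [star_trivial, quadForm_eq]
    have hAx : A *ᵥ x ≠ 0 := mulVec_inj' A hrank hx
    obtain ⟨k, hk⟩ : ∃ k, A k ⬝ᵥ x ≠ 0 := by
      by_contra hc
      push_neg at hc
      exact hAx (funext fun k => hc k)
    refine Finset.sum_pos' (fun j _ => mul_nonneg (hv j).le (sq_nonneg _)) ⟨k, mem_univ k, ?_⟩
    exact mul_pos (hv k) (pow_pos (abs_pos.mpr hk) 2 |>.trans_eq (by rw [sq_abs]) )

private theorem symm_dot {d : ℕ} {M : Matrix (Fin d) (Fin d) ℝ} (hM : M.IsSymm)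
    (x y : Fin d → ℝ) : y ⬝ᵥ M *ᵥ x = x ⬝ᵥ M *ᵥ y := by
  rw [dotProduct_mulVec, ← mulVec_transpose, hM.eq, dotProduct_comm]

private theorem cs_ineq {d : ℕ} {M : Matrix (Fin d) (Fin d) ℝ} (hM : M.PosSemidef) (hs : M.IsSymm)
    (x y : Fin d → ℝ) :
    (x ⬝ᵥ M *ᵥ y)^2 ≤ (x ⬝ᵥ M *ᵥ x) * (y ⬝ᵥ M *ᵥ y) := by
  have key : ∀ t : ℝ, 0 ≤ (y ⬝ᵥ M *ᵥ y) * (t * t) + (2 * (x ⬝ᵥ M *ᵥ y)) * t + (x ⬝ᵥ M *ᵥ x) := by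
    intro t
    have h0 := hM.dotProduct_mulVec_nonneg (x + t • y)
    simp only [star_trivial, mulVec_add, mulVec_smul, dotProduct_add, add_dotProduct,
      dotProduct_smul, smul_dotProduct, smul_eq_mul] at h0
    rw [symm_dot hs x y] at h0
    nlinarith [h0]
  have hd := discrim_le_zero key
  rw [discrim] at hd
  nlinarith [hd]

/-- `σᵢ(v) = aᵢᵀ (Σⱼ vⱼ aⱼ aⱼᵀ)⁻¹ aᵢ`, where `aᵢᵀ` is the `i`-th row of `A`. -/
noncomputable def sigmaFn {n d : ℕ} (A : Matrix (Fin n) (Fin d) ℝ) (v : Fin n → ℝ)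
    (i : Fin n) : ℝ :=
  A i ⬝ᵥ ((∑ j : Fin n, v j • vecMulVec (A j) (A j))⁻¹ *ᵥ A i)

private theorem sigma_pos {n d : ℕ} (A : Matrix (Fin n) (Fin d) ℝ) (hrank : A.rank = d)
    (ha : ∀ i : Fin n, A i ≠ 0) {v : Fin n → ℝ} (hv : ∀ j, 0 < v j) (i : Fin n) :
    0 < sigmaFn A v i := by
  have h := (Mposdef A hrank hv).inv
  have := h.dotProduct_mulVec_pos (ha i)
  simpa [sigmaFn] using this

/-- For each `i`, the function `φᵢ(v) = log σᵢ(v)` is convex on the set of vectors with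
strictly positive entries. -/
theorem phi_convex
    (n d : ℕ) (A : Matrix (Fin n) (Fin d) ℝ) (hrank : A.rank = d)
    (ha : ∀ i : Fin n, A i ≠ 0) (i : Fin n) :
    ConvexOn ℝ {v : Fin n → ℝ | ∀ j, 0 < v j} (fun v => Real.log (sigmaFn A v i)) := by
  constructor
  · -- convexity of the set
    intro u hu w hw a b hA hb hab
    intro j
    rcases eq_or_lt_of_le hA with h0 | h0
    · simpa [← h0, (show b = 1 by linarith)] using hw j
    · have h1 : 0 ≤ b * w j := mul_nonneg hb (hw j).le
      have h2 : 0 < a * u j := mul_pos h0 (hu j)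
      simpa using by linarith
  · intro u hu w hw a b hA hb hab
    rcases eq_or_lt_of_le hA with h0 | hA
    · simp [← h0, (by linarith : b = 1)]
    rcases eq_or_lt_of_le hb with h0 | hb
    · simp [← h0, (by linarith : a = 1)]
    simp only [Set.mem_setOf_eq] at hu hw
    set M : (Fin n → ℝ) → Matrix (Fin d) (Fin d) ℝ :=
      fun v => ∑ j : Fin n, v j • vecMulVec (A j) (A j) with hM
    have hc : ∀ j, 0 < (a • u + b • w) j := fun j => by
      have : 0 < a * u j := mul_pos hA (hu j)
      have : 0 < b * w j := mul_pos hb (hw j)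
      simp only [Pi.add_apply, Pi.smul_apply, smul_eq_mul]; linarith
    -- positive definiteness
    have pdu := Mposdef A hrank hu
    have pdw := Mposdef A hrank hw
    have pdc := Mposdef A hrank hc
    -- M is affine: M (a•u + b•w) = a • M u + b • M w
    have hMaff : M (a • u + b • w) = a • M u + b • M w := by
      rw [hM]
      simp only [Pi.add_apply, Pi.smul_apply, smul_eq_mul, add_smul, smul_smul,
        Finset.sum_add_distrib, Finset.smul_sum]
    set z : Fin d → ℝ := (M (a • u + b • w))⁻¹ *ᵥ A i with hz
    have hMz : M (a • u + b • w) *ᵥ z = A i := by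
      rw [hz, mulVec_mulVec, Matrix.mul_nonsing_inv _ (isUnit_iff_ne_zero.mpr pdc.det_pos.ne'),
        one_mulVec]
    have hs : sigmaFn A (a • u + b • w) i = A i ⬝ᵥ z := rfl
    have hspos : 0 < sigmaFn A (a • u + b • w) i := sigma_pos A hrank ha hc i
    have hzq : z ⬝ᵥ M (a • u + b • w) *ᵥ z = sigmaFn A (a • u + b • w) i := by
      rw [hMz, dotProduct_comm, hs]
    have hzne : z ≠ 0 := by
      intro h0
      rw [hs, h0, dotProduct_zero] at hspos
      exact lt_irrefl _ hspos
    set p : ℝ := z ⬝ᵥ M u *ᵥ z with hp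
    set q : ℝ := z ⬝ᵥ M w *ᵥ z with hq
    have hppos : 0 < p := by simpa [hp] using pdu.dotProduct_mulVec_pos hzne
    have hqpos : 0 < q := by simpa [hq] using pdw.dotProduct_mulVec_pos hzne
    have hsum : a * p + b * q = sigmaFn A (a • u + b • w) i := by
      rw [← hzq, hMaff]
      simp [add_mulVec, smul_mulVec, dotProduct_add, dotProduct_smul, hp, hq]
    -- Cauchy-Schwarz : (A i ⬝ᵥ z)^2 ≤ p * sigmaFn A u i
    have hcs : ∀ (v : Fin n → ℝ), (∀ j, 0 < v j) →
        (sigmaFn A (a • u + b • w) i)^2 ≤ (z ⬝ᵥ M v *ᵥ z) * sigmaFn A v i := by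
      intro v hv
      have pdv := Mposdef A hrank hv
      have hMv : M v *ᵥ ((M v)⁻¹ *ᵥ A i) = A i := by
        rw [mulVec_mulVec, Matrix.mul_nonsing_inv _ (isUnit_iff_ne_zero.mpr pdv.det_pos.ne'),
          one_mulVec]
      have h1 : z ⬝ᵥ M v *ᵥ ((M v)⁻¹ *ᵥ A i) = sigmaFn A (a • u + b • w) i := by
        rw [hMv, hs, dotProduct_comm]
      have h2 : ((M v)⁻¹ *ᵥ A i) ⬝ᵥ M v *ᵥ ((M v)⁻¹ *ᵥ A i) = sigmaFn A v i := by
        rw [hMv, dotProduct_comm]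
        rfl
      have := cs_ineq pdv.posSemidef (Msymm A v) z ((M v)⁻¹ *ᵥ A i)
      rw [h1] at this
      calc (sigmaFn A (a • u + b • w) i)^2
          ≤ (z ⬝ᵥ M v *ᵥ z) * (((M v)⁻¹ *ᵥ A i) ⬝ᵥ M v *ᵥ ((M v)⁻¹ *ᵥ A i)) := this
        _ = (z ⬝ᵥ M v *ᵥ z) * sigmaFn A v i := by rw [h2]
    have hσu : 0 < sigmaFn A u i := sigma_pos A hrank ha hu i
    have hσw : 0 < sigmaFn A w i := sigma_pos A hrank ha hw i
    -- take logs
    set s := sigmaFn A (a • u + b • w) i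
    have hlog1 : 2 * Real.log s ≤ Real.log p + Real.log (sigmaFn A u i) := by
      have := hcs u hu
      have h2 : Real.log (s^2) ≤ Real.log (p * sigmaFn A u i) :=
        Real.log_le_log (by positivity) this
      rwa [Real.log_pow, Real.log_mul hppos.ne' hσu.ne'] at h2
      
    have hlog2 : 2 * Real.log s ≤ Real.log q + Real.log (sigmaFn A w i) := by
      have := hcs w hw
      have h2 : Real.log (s^2) ≤ Real.log (q * sigmaFn A w i) :=
        Real.log_le_log (by positivity) this
      rwa [Real.log_pow, Real.log_mul hqpos.ne' hσw.ne'] at h2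
    -- concavity of log
    have hconc : a * Real.log p + b * Real.log q ≤ Real.log (a * p + b * q) := by
      have := strictConcaveOn_log_Ioi.concaveOn.2 (Set.mem_Ioi.mpr hppos)
        (Set.mem_Ioi.mpr hqpos) hA.le hb.le hab
      simpa using this
    rw [hsum] at hconc
    have final : Real.log s ≤ a * Real.log (sigmaFn A u i) + b * Real.log (sigmaFn A w i) := by
      have habs : a * Real.log s + b * Real.log s = Real.log s := by
        rw [← add_mul, hab, one_mul]
      nlinarith [mul_le_mul_of_nonneg_left hlog1 hA.le, mul_le_mul_of_nonneg_left hlog2 hb.le,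
        hconc, habs]
    simpa only [smul_eq_mul] using final
end

section
/- A vector w ∈ ℝ^n with nonnegative entries and Q(w) := Σ_{i=1}^n w_i a_i a_iᵀ positive definite is a minimizer of the function f(w) = Σ_{i=1}^n w_i − log det(Σ_{i=1}^n w_i a_i a_iᵀ) − d over the set {w ∈ ℝ^n : w_i ≥ 0 for all i, Σ_i w_i a_i a_iᵀ positive definite} if and only if: Σ_{i=1}^n w_i = d; a_jᵀQ(w)⁻¹a_j = 1 for every j with w_j > 0; and a_jᵀQ(w)⁻¹a_j ≤ 1 for every j with w_j = 0. -/
open Matrix Finset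

/-- `Q(w) = Σᵢ wᵢ aᵢ aᵢᵀ`, where `aᵢᵀ` is the `i`-th row of `A`. -/
noncomputable def Qmat {n d : ℕ} (A : Matrix (Fin n) (Fin d) ℝ) (w : Fin n → ℝ) :
    Matrix (Fin d) (Fin d) ℝ :=
  ∑ i : Fin n, w i • vecMulVec (A i) (A i)

/-- The objective of the John ellipsoid program:
`f(w) = Σᵢ wᵢ − log det(Σᵢ wᵢ aᵢ aᵢᵀ) − d`. -/
noncomputable def johnObj {n d : ℕ} (A : Matrix (Fin n) (Fin d) ℝ) (w : Fin n → ℝ) : ℝ :=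
  (∑ i : Fin n, w i) - Real.log (Qmat A w).det - d

section aux

variable {n d : ℕ}

lemma JE.vecMulVec_mulVec' (a x : Fin d → ℝ) : vecMulVec a a *ᵥ x = (a ⬝ᵥ x) • a := by
  ext i
  simp [Matrix.mulVec, vecMulVec_apply, dotProduct, Finset.mul_sum, mul_assoc,
    mul_comm, mul_left_comm]

lemma JE.dot_vecMulVec (a x : Fin d → ℝ) :
    x ⬝ᵥ (vecMulVec a a *ᵥ x) = (a ⬝ᵥ x) ^ 2 := by
  rw [JE.vecMulVec_mulVec', dotProduct_smul, smul_eq_mul, dotProduct_comm, sq]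

lemma JE.psd_vecMulVec (a : Fin d → ℝ) : (vecMulVec a a).PosSemidef := by
  refine Matrix.PosSemidef.of_dotProduct_mulVec_nonneg ?_ (fun x => ?_)
  · ext i j
    simp [vecMulVec_apply, conjTranspose_apply, mul_comm]
  · have := JE.dot_vecMulVec a x
    simp only [star_trivial]
    rw [this]
    positivity

lemma JE.psd_smul {M : Matrix (Fin d) (Fin d) ℝ} (h : M.PosSemidef) {c : ℝ} (hc : 0 ≤ c) :
    (c • M).PosSemidef := by
  refine Matrix.PosSemidef.of_dotProduct_mulVec_nonneg ?_ (fun x => ?_)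
  · unfold Matrix.IsHermitian
    rw [conjTranspose_smul, h.1]
    simp
  · rw [smul_mulVec, dotProduct_smul, smul_eq_mul]
    exact mul_nonneg hc (by simpa using h.dotProduct_mulVec_nonneg x)

lemma JE.posdef_smul {M : Matrix (Fin d) (Fin d) ℝ} (h : M.PosDef) {c : ℝ} (hc : 0 < c) :
    (c • M).PosDef := by
  refine Matrix.PosDef.of_dotProduct_mulVec_pos (JE.psd_smul h.posSemidef hc.le).1 (fun x hx => ?_)
  rw [smul_mulVec, dotProduct_smul, smul_eq_mul]
  exact mul_pos hc (by simpa using h.dotProduct_mulVec_pos hx)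

lemma JE.Qmat_posSemidef (A : Matrix (Fin n) (Fin d) ℝ) {w : Fin n → ℝ} (hw : ∀ i, 0 ≤ w i) :
    (Qmat A w).PosSemidef := by
  classical
  unfold Qmat
  have h : ∀ i : Fin n, (w i • vecMulVec (A i) (A i)).PosSemidef :=
    fun i => JE.psd_smul (JE.psd_vecMulVec _) (hw i)
  induction (Finset.univ : Finset (Fin n)) using Finset.induction with
  | empty => simpa using (PosSemidef.zero : (0 : Matrix (Fin d) (Fin d) ℝ).PosSemidef)
  | insert _ _ hx ih =>
    rw [Finset.sum_insert hx]
    exact (h _).add ih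

lemma JE.trace_eq_sum_eigs {M : Matrix (Fin d) (Fin d) ℝ} (hM : M.IsHermitian) :
    M.trace = ∑ i, hM.eigenvalues i := by
  simpa using hM.trace_eq_sum_eigenvalues

lemma JE.log_det_le_trace_sub {M : Matrix (Fin d) (Fin d) ℝ} (hM : M.PosDef) :
    Real.log M.det ≤ M.trace - d := by
  have hH := hM.isHermitian
  have hdet : M.det = ∏ i, hH.eigenvalues i := by simpa using hH.det_eq_prod_eigenvalues
  rw [hdet, JE.trace_eq_sum_eigs hH,
    Real.log_prod (fun i _ => (hM.eigenvalues_pos i).ne')]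
  calc ∑ i, Real.log (hH.eigenvalues i) ≤ ∑ i, (hH.eigenvalues i - 1) :=
        Finset.sum_le_sum fun i _ => Real.log_le_sub_one_of_pos (hM.eigenvalues_pos i)
    _ = (∑ i, hH.eigenvalues i) - d := by
        rw [Finset.sum_sub_distrib]; simp

lemma JE.posdef_conj {T R : Matrix (Fin d) (Fin d) ℝ}
    (hT : T.IsHermitian) (hTdet : IsUnit T.det) (hR : R.PosDef) : (T * R * T).PosDef := by
  refine Matrix.PosDef.of_dotProduct_mulVec_pos ?_ (fun x hx => ?_)
  · unfold Matrix.IsHermitian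
    rw [conjTranspose_mul, conjTranspose_mul, hT.eq, hR.isHermitian.eq, Matrix.mul_assoc]
  · have hy : T *ᵥ x ≠ 0 := by
      have hinj :=
        (Matrix.mulVec_injective_iff_isUnit.mpr (Matrix.isUnit_iff_isUnit_det _ |>.mpr hTdet))
      intro h
      exact hx (hinj (by simpa using h))
    have key : star x ⬝ᵥ ((T * R * T) *ᵥ x) = star (T *ᵥ x) ⬝ᵥ (R *ᵥ (T *ᵥ x)) := by
      have hTt : Tᵀ = T := by
        ext i j
        simpa [Matrix.conjTranspose_apply] using congrFun (congrFun hT.eq i) j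
      simp only [star_trivial, ← Matrix.mulVec_mulVec]
      rw [Matrix.dotProduct_mulVec x T, ← Matrix.mulVec_transpose, hTt]
    rw [key]
    exact hR.dotProduct_mulVec_pos hy

lemma JE.logdet_concavity {P R : Matrix (Fin d) (Fin d) ℝ}
    (hP : P.PosDef) (hR : R.PosDef) :
    Real.log R.det - Real.log P.det ≤ (P⁻¹ * R).trace - d := by
  classical
  obtain ⟨S, hSS, hSherm⟩ : ∃ S : Matrix (Fin d) (Fin d) ℝ, S * S = P ∧ S.IsHermitian := by
    open scoped MatrixOrder in
    exact ⟨CFC.sqrt P, CFC.sqrt_mul_sqrt_self P hP.posSemidef.nonneg,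
      (CFC.sqrt_nonneg P).posSemidef.isHermitian⟩
  have hSdet : S.det ≠ 0 := by
    intro h
    have : P.det = 0 := by rw [← hSS, det_mul, h, mul_zero]
    exact (hP.det_pos).ne' this
  have hSidet : (S⁻¹).det ≠ 0 := by
    rw [Matrix.det_nonsing_inv]
    simpa using hSdet
  have hMpd : (S⁻¹ * R * S⁻¹).PosDef :=
    JE.posdef_conj hSherm.inv (isUnit_iff_ne_zero.mpr hSidet) hR
  have hPinv : P⁻¹ = S⁻¹ * S⁻¹ := by rw [← hSS, Matrix.mul_inv_rev]
  have htr : (S⁻¹ * R * S⁻¹).trace = (P⁻¹ * R).trace := by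
    rw [Matrix.trace_mul_cycle, hPinv, Matrix.mul_assoc]
  have hdet : (S⁻¹ * R * S⁻¹).det = R.det * (S.det)⁻¹ * (S.det)⁻¹ := by
    rw [det_mul, det_mul, Matrix.det_nonsing_inv, Ring.inverse_eq_inv']
    ring
  have hlog : Real.log (S⁻¹ * R * S⁻¹).det = Real.log R.det - Real.log P.det := by
    have hinv : (S.det)⁻¹ ≠ 0 := inv_ne_zero hSdet
    rw [hdet, Real.log_mul (mul_ne_zero hR.det_pos.ne' hinv) hinv,
      Real.log_mul hR.det_pos.ne' hinv,
      Real.log_inv, ← hSS, det_mul, Real.log_mul hSdet hSdet]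
    ring
  have := JE.log_det_le_trace_sub hMpd
  rw [hlog, htr] at this
  exact this

lemma JE.Qmat_smul (A : Matrix (Fin n) (Fin d) ℝ) (w : Fin n → ℝ) (t : ℝ) :
    Qmat A (t • w) = t • Qmat A w := by
  unfold Qmat
  rw [Finset.smul_sum]
  refine Finset.sum_congr rfl fun i _ => ?_
  simp [mul_smul]

lemma JE.Qmat_update (A : Matrix (Fin n) (Fin d) ℝ) (w : Fin n → ℝ) (j : Fin n) (t : ℝ) :
    Qmat A (Function.update w j (w j + t)) = Qmat A w + t • vecMulVec (A j) (A j) := by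
  classical
  unfold Qmat
  have h1 : ∀ i : Fin n, (Function.update w j (w j + t)) i • vecMulVec (A i) (A i)
      = w i • vecMulVec (A i) (A i)
        + (if i = j then t • vecMulVec (A j) (A j) else 0) := by
    intro i
    by_cases h : i = j
    · subst h; simp [Function.update_self, add_smul]
    · simp [Function.update_of_ne h, h]
  rw [Finset.sum_congr rfl fun i _ => h1 i, Finset.sum_add_distrib]
  simp

lemma JE.trace_mul_Qmat (A : Matrix (Fin n) (Fin d) ℝ) (M : Matrix (Fin d) (Fin d) ℝ)
    (w : Fin n → ℝ) :
    (M * Qmat A w).trace = ∑ i, w i * (A i ⬝ᵥ (M *ᵥ A i)) := by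
  unfold Qmat
  rw [Matrix.mul_sum, Matrix.trace_sum]
  refine Finset.sum_congr rfl fun i _ => ?_
  rw [Matrix.mul_smul, Matrix.trace_smul, smul_eq_mul]
  congr 1
  simp only [Matrix.trace, Matrix.diag, Matrix.mul_apply, vecMulVec_apply, dotProduct,
    Matrix.mulVec]
  refine Finset.sum_congr rfl fun k _ => ?_
  rw [Finset.mul_sum]
  refine Finset.sum_congr rfl fun l _ => ?_
  ring

lemma JE.det_rank_one_update {Q : Matrix (Fin d) (Fin d) ℝ} (hQ : IsUnit Q.det)
    (a : Fin d → ℝ) (t : ℝ) :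
    (Q + t • vecMulVec a a).det = Q.det * (1 + t * (a ⬝ᵥ (Q⁻¹ *ᵥ a))) := by
  classical
  have h1 : t • vecMulVec a a = vecMulVec (t • a) a := by
    ext i j; simp [vecMulVec_apply]; ring
  rw [h1, vecMulVec_eq Unit, Matrix.det_add_replicateCol_mul_replicateRow hQ]
  congr 1
  rw [det_unique, Matrix.add_apply, Matrix.one_apply_eq]
  congr 1
  rw [Matrix.mul_apply]
  simp only [Matrix.mul_apply, Matrix.replicateRow_apply, Matrix.replicateCol_apply, Pi.smul_apply, smul_eq_mul,
    Finset.sum_mul, Finset.mul_sum]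
  rw [dotProduct, Finset.mul_sum]
  rw [Finset.sum_comm]
  refine Finset.sum_congr rfl fun k _ => ?_
  rw [Matrix.mulVec, dotProduct, Finset.mul_sum, Finset.mul_sum]
  refine Finset.sum_congr rfl fun l _ => ?_
  ring

end aux

/-- Optimality criteria for the John ellipsoid program: a feasible `w` (nonnegative entries,
`Q(w)` positive definite) is a minimizer iff `Σᵢ wᵢ = d`, `aⱼᵀ Q(w)⁻¹ aⱼ = 1` whenever
`wⱼ > 0`, and `aⱼᵀ Q(w)⁻¹ aⱼ ≤ 1` whenever `wⱼ = 0`. -/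
theorem john_ellipsoid_optimality_criteria
    (n d : ℕ) (A : Matrix (Fin n) (Fin d) ℝ) (hrank : A.rank = d)
    (w : Fin n → ℝ) (hw : ∀ i, 0 ≤ w i) (hQ : (Qmat A w).PosDef) :
    (∀ w' : Fin n → ℝ, (∀ i, 0 ≤ w' i) → (Qmat A w').PosDef →
        johnObj A w ≤ johnObj A w') ↔
      ((∑ i : Fin n, w i) = (d : ℝ) ∧
        (∀ j : Fin n, 0 < w j → A j ⬝ᵥ ((Qmat A w)⁻¹ *ᵥ A j) = 1) ∧
        (∀ j : Fin n, w j = 0 → A j ⬝ᵥ ((Qmat A w)⁻¹ *ᵥ A j) ≤ 1)) := by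
  classical
  set Q := Qmat A w with hQdef
  have hdet : 0 < Q.det := hQ.det_pos
  have hunit : IsUnit Q.det := isUnit_iff_ne_zero.mpr hdet.ne'
  set c : Fin n → ℝ := fun j => A j ⬝ᵥ (Q⁻¹ *ᵥ A j) with hcdef
  constructor
  · intro hmin
    -- Part 1: the sum equals d
    have hscale : ∀ t : ℝ, 0 < t → (d : ℝ) * Real.log t ≤ (t - 1) * (∑ i, w i) := by
      intro t ht
      have hfeas : ∀ i, 0 ≤ (t • w) i := fun i => by
        simpa using mul_nonneg ht.le (hw i)
      have hpd : (Qmat A (t • w)).PosDef := by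
        rw [JE.Qmat_smul]; exact JE.posdef_smul hQ ht
      have hobj := hmin _ hfeas hpd
      have h1 : (∑ i, (t • w) i) = t * ∑ i, w i := by simp [Finset.mul_sum]
      have h2 : (Qmat A (t • w)).det = t ^ d * Q.det := by
        rw [JE.Qmat_smul, Matrix.det_smul, ← hQdef]; simp
      have h3 : Real.log (t ^ d * Q.det) = d * Real.log t + Real.log Q.det := by
        rw [Real.log_mul (pow_ne_zero d ht.ne') hdet.ne', Real.log_pow]
      unfold johnObj at hobj
      rw [h1, h2, h3] at hobj
      linarith
    have htendd : Filter.Tendsto (fun t : ℝ => (d : ℝ) / t) (nhds 1) (nhds d) := by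
      have h := (ContinuousAt.div (continuousAt_const (y := (d:ℝ)))
        continuousAt_id one_ne_zero)
      simpa [Pi.div_def] using h.tendsto
    have hge : (d : ℝ) ≤ ∑ i, w i := by
      refine le_of_tendsto (htendd.mono_left (nhdsWithin_le_nhds (s := Set.Ioi (1:ℝ)))) ?_
      filter_upwards [self_mem_nhdsWithin] with t ht
      have ht1 : (1:ℝ) < t := ht
      have ht0 : (0:ℝ) < t := lt_trans one_pos ht1
      have h := hscale t ht0
      have hlog : 1 - t⁻¹ ≤ Real.log t := by
        have h2 := Real.log_le_sub_one_of_pos (inv_pos.mpr ht0)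
        rw [Real.log_inv] at h2
        linarith
      have hd0 : (0:ℝ) ≤ d := Nat.cast_nonneg d
      rw [div_le_iff₀ ht0]
      have h4 : (d:ℝ) * (1 - t⁻¹) ≤ (t - 1) * ∑ i, w i :=
        le_trans (mul_le_mul_of_nonneg_left hlog hd0) h
      have h6 : (d:ℝ) * (t - 1) ≤ (t - 1) * (∑ i, w i) * t := by
        have h5 : (d:ℝ) * (1 - t⁻¹) * t = d * (t - 1) := by field_simp
        calc (d:ℝ) * (t - 1) = d * (1 - t⁻¹) * t := h5.symm
          _ ≤ (t - 1) * (∑ i, w i) * t := mul_le_mul_of_nonneg_right h4 ht0.le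
      nlinarith [h6, sub_pos.mpr ht1]
    have hle : (∑ i, w i) ≤ (d : ℝ) := by
      refine ge_of_tendsto (htendd.mono_left (nhdsWithin_le_nhds (s := Set.Iio (1:ℝ)))) ?_
      filter_upwards [Ioo_mem_nhdsLT_of_mem (show (1:ℝ) ∈ Set.Ioc (0:ℝ) 1 by constructor <;> norm_num)]
        with t ht
      have ht0 : (0:ℝ) < t := ht.1
      have ht1 : t < 1 := ht.2
      have h := hscale t ht0
      have hlog : 1 - t⁻¹ ≤ Real.log t := by
        have h2 := Real.log_le_sub_one_of_pos (inv_pos.mpr ht0)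
        rw [Real.log_inv] at h2
        linarith
      have hd0 : (0:ℝ) ≤ d := Nat.cast_nonneg d
      rw [le_div_iff₀ ht0]
      have h4 : (d:ℝ) * (1 - t⁻¹) ≤ (t - 1) * ∑ i, w i :=
        le_trans (mul_le_mul_of_nonneg_left hlog hd0) h
      have h6 : (d:ℝ) * (t - 1) ≤ (t - 1) * (∑ i, w i) * t := by
        have h5 : (d:ℝ) * (1 - t⁻¹) * t = d * (t - 1) := by field_simp
        calc (d:ℝ) * (t - 1) = d * (1 - t⁻¹) * t := h5.symm
          _ ≤ (t - 1) * (∑ i, w i) * t := mul_le_mul_of_nonneg_right h4 ht0.le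
      nlinarith [h6, sub_pos.mpr ht1]
    have hsum : (∑ i, w i) = (d : ℝ) := le_antisymm hle hge
    -- Part 2: perturbation inequalities
    have hupd_posdef : ∀ (j : Fin n) (t : ℝ), (0 ≤ t ∨ (-(w j) < t ∧ t < 0)) →
        (Qmat A (Function.update w j (w j + t))).PosDef := by
      intro j t ht
      rw [JE.Qmat_update]
      rcases ht with ht | ⟨ht1, ht2⟩
      · exact hQ.add_posSemidef (JE.psd_smul (JE.psd_vecMulVec _) ht)
      · have hwj : 0 < w j := by
          rcases (hw j).eq_or_lt with h | h
          · exfalso; rw [← h] at ht1; simp at ht1; linarith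
          · exact h
        set s : ℝ := -t / w j with hsdef
        have hs0 : 0 < s := div_pos (neg_pos.mpr ht2) hwj
        have hs1 : s < 1 := by rw [div_lt_one hwj]; linarith
        have hw0 : ∀ i, 0 ≤ Function.update w j 0 i := by
          intro i
          by_cases h : i = j
          · subst h; simp
          · simpa [Function.update_of_ne h] using hw i
        have hQ0 : (Qmat A (Function.update w j 0)).PosSemidef := JE.Qmat_posSemidef A hw0
        have hdecomp : Qmat A w + t • vecMulVec (A j) (A j)
            = (1 - s) • Qmat A w + s • Qmat A (Function.update w j 0) := by
          have h0 : Qmat A (Function.update w j 0)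
              = Qmat A w + (-(w j)) • vecMulVec (A j) (A j) := by
            have h := JE.Qmat_update A w j (-(w j))
            simpa using h
          have hsw : s * w j = -t := div_mul_cancel₀ _ hwj.ne'
          rw [h0, smul_add, smul_smul, ← add_assoc, ← add_smul]
          have h1 : (1 - s) + s = 1 := by ring
          rw [h1, one_smul]
          congr 1
          rw [mul_neg, hsw]
          ring_nf
        rw [hdecomp]
        exact (JE.posdef_smul hQ (by linarith)).add_posSemidef (JE.psd_smul hQ0 hs0.le)
    have hkey : ∀ (j : Fin n) (t : ℝ), (0 ≤ t ∨ (-(w j) < t ∧ t < 0)) →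
        1 + t * c j ≤ Real.exp t := by
      intro j t ht
      have hfeas1 : ∀ i, 0 ≤ Function.update w j (w j + t) i := by
        intro i
        by_cases h : i = j
        · rw [h, Function.update_self]
          rcases ht with h' | ⟨h1, h2⟩
          · linarith [hw j]
          · linarith
        · simpa [Function.update_of_ne h] using hw i
      have hpd := hupd_posdef j t ht
      have hobj := hmin _ hfeas1 hpd
      have hdetQ' : (Qmat A (Function.update w j (w j + t))).det = Q.det * (1 + t * c j) := by
        rw [JE.Qmat_update]
        exact JE.det_rank_one_update hunit (A j) t
      have hpos : 0 < 1 + t * c j := by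
        have h := hpd.det_pos
        rw [hdetQ'] at h
        nlinarith
      have hsum' : (∑ i, Function.update w j (w j + t) i) = (∑ i, w i) + t := by
        rw [Finset.sum_update_of_mem (Finset.mem_univ j)]
        have h := Finset.sum_eq_sum_sdiff_singleton_add (Finset.mem_univ j) w
        linarith
      have hobj' : johnObj A (Function.update w j (w j + t))
          = johnObj A w + (t - Real.log (1 + t * c j)) := by
        unfold johnObj
        rw [hsum', hdetQ', Real.log_mul hdet.ne' hpos.ne']
        ring
      rw [hobj'] at hobj
      have hlog : Real.log (1 + t * c j) ≤ t := by linarith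
      calc 1 + t * c j = Real.exp (Real.log (1 + t * c j)) := (Real.exp_log hpos).symm
        _ ≤ Real.exp t := Real.exp_le_exp.mpr hlog
    have hslope : Filter.Tendsto (slope Real.exp 0) (nhdsWithin 0 {(0:ℝ)}ᶜ) (nhds 1) := by
      have h := Real.hasDerivAt_exp 0
      rw [Real.exp_zero] at h
      exact hasDerivAt_iff_tendsto_slope.mp h
    have hcle : ∀ j, c j ≤ 1 := by
      intro j
      refine ge_of_tendsto (hslope.mono_left (nhdsWithin_mono 0
        (fun x (hx : x ∈ Set.Ioi (0:ℝ)) => (ne_of_gt hx : x ≠ 0)))) ?_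
      filter_upwards [self_mem_nhdsWithin] with t ht
      have ht0 : (0:ℝ) < t := ht
      have hk := hkey j t (Or.inl ht0.le)
      rw [slope_def_field, Real.exp_zero, sub_zero]
      rw [le_div_iff₀ ht0]
      nlinarith
    have hcge : ∀ j, 0 < w j → 1 ≤ c j := by
      intro j hj
      refine le_of_tendsto (hslope.mono_left (nhdsWithin_mono 0
        (fun x (hx : x ∈ Set.Iio (0:ℝ)) => (ne_of_lt hx : x ≠ 0)))) ?_
      filter_upwards [Ioo_mem_nhdsLT_of_mem
        (show (0:ℝ) ∈ Set.Ioc (-(w j)) 0 by constructor <;> simp [hj])] with t ht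
      have hk := hkey j t (Or.inr ⟨ht.1, ht.2⟩)
      rw [slope_def_field, Real.exp_zero, sub_zero]
      rw [div_le_iff_of_neg ht.2]
      nlinarith
    exact ⟨hsum, fun j hj => le_antisymm (hcle j) (hcge j hj), fun j _ => hcle j⟩
  · rintro ⟨hsum, heqc, hlec⟩ w' hw' hQ'
    have hcall : ∀ i, c i ≤ 1 := by
      intro i
      rcases (hw i).eq_or_lt with h | h
      · exact hlec i h.symm
      · exact le_of_eq (heqc i h)
    have htr : (Q⁻¹ * Qmat A w').trace = ∑ i, w' i * c i := JE.trace_mul_Qmat A Q⁻¹ w'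
    have htr_le : (Q⁻¹ * Qmat A w').trace ≤ ∑ i, w' i := by
      rw [htr]
      refine Finset.sum_le_sum fun i _ => ?_
      calc w' i * c i ≤ w' i * 1 := mul_le_mul_of_nonneg_left (hcall i) (hw' i)
        _ = w' i := mul_one _
    have hcc := JE.logdet_concavity hQ hQ'
    unfold johnObj
    rw [← hQdef]
    linarith
end

section
/- Let ε ≥ 0 and let w ∈ ℝ^n with nonnegative entries satisfy Σ_{i=1}^n w_i = d and a_jᵀQ⁻¹a_j ≤ 1+ε for all j ∈ [n], where Q = Σ_{i=1}^n w_i a_i a_iᵀ is positive definite. Define the ellipsoid E = {x ∈ ℝ^d : xᵀQx ≤ 1}. Then (1/√(1+ε))·E ⊆ P ⊆ √d·E, where c·E denotes {c·x : x ∈ E}. -/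
/-!
For `x ∈ E` and any row `a`, Cauchy–Schwarz for the form `Q` applied to `x` and `Q⁻¹ a` gives
`(aᵀx)² ≤ (xᵀQx)(aᵀQ⁻¹a) ≤ 1 + ε`, so shrinking `E` by `√(1+ε)` lands in `P`.
Conversely, for `x ∈ P` every `(aᵢᵀx)²` is at most `1`, hence
`xᵀQx = Σᵢ wᵢ (aᵢᵀx)² ≤ Σᵢ wᵢ = d`, i.e. `x ∈ √d · E`.
-/

open Matrix Finset Pointwise

section Qmat

variable {n d : ℕ} (A : Matrix (Fin n) (Fin d) ℝ) {w : Fin n → ℝ}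

theorem dotProduct_Qmat_mulVec (w : Fin n → ℝ) (x y : Fin d → ℝ) :
    x ⬝ᵥ (Qmat A w *ᵥ y) = ∑ i, w i * ((A i ⬝ᵥ x) * (A i ⬝ᵥ y)) := by
  simp only [Qmat, sum_mulVec, smul_mulVec, vecMulVec_mulVec, op_smul_eq_smul, dotProduct_comm x,
    sum_dotProduct, smul_dotProduct, smul_eq_mul]
  exact sum_congr rfl fun i _ => by ring

theorem sq_dotProduct_Qmat_mulVec_le (hw : ∀ i, 0 ≤ w i) (x y : Fin d → ℝ) :
    (x ⬝ᵥ (Qmat A w *ᵥ y)) ^ 2 ≤ (x ⬝ᵥ (Qmat A w *ᵥ x)) * (y ⬝ᵥ (Qmat A w *ᵥ y)) := by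
  simp only [dotProduct_Qmat_mulVec]
  refine sum_sq_le_sum_mul_sum_of_sq_le_mul _ (fun i _ => ?_) (fun i _ => ?_) fun i _ => ?_
  · exact mul_nonneg (hw i) (mul_self_nonneg _)
  · exact mul_nonneg (hw i) (mul_self_nonneg _)
  · exact le_of_eq (by ring)

theorem posSemidef_Qmat (hw : ∀ i, 0 ≤ w i) : (Qmat A w).PosSemidef := by
  refine .of_dotProduct_mulVec_nonneg ?_ fun x => ?_
  · simp only [IsHermitian, Qmat, conjTranspose_sum, conjTranspose_smul, conjTranspose_vecMulVec,
      star_trivial]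
  · rw [star_trivial, dotProduct_Qmat_mulVec]
    exact sum_nonneg fun i _ => mul_nonneg (hw i) (mul_self_nonneg _)

theorem sq_dotProduct_le_mul_dotProduct_inv_mulVec (hw : ∀ i, 0 ≤ w i)
    (hQ : IsUnit (Qmat A w).det) (a x : Fin d → ℝ) :
    (a ⬝ᵥ x) ^ 2 ≤ (x ⬝ᵥ (Qmat A w *ᵥ x)) * (a ⬝ᵥ ((Qmat A w)⁻¹ *ᵥ a)) := by
  have hQQinv : Qmat A w *ᵥ ((Qmat A w)⁻¹ *ᵥ a) = a := by
    rw [mulVec_mulVec, mul_nonsing_inv _ hQ, one_mulVec]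
  simpa only [hQQinv, dotProduct_comm x, dotProduct_comm _ a] using
    sq_dotProduct_Qmat_mulVec_le A hw x ((Qmat A w)⁻¹ *ᵥ a)

theorem dotProduct_Qmat_mulVec_self_le_sum (hw : ∀ i, 0 ≤ w i) {x : Fin d → ℝ}
    (hx : ∀ i, |A i ⬝ᵥ x| ≤ 1) : x ⬝ᵥ (Qmat A w *ᵥ x) ≤ ∑ i, w i := by
  rw [dotProduct_Qmat_mulVec]
  refine sum_le_sum fun i _ => mul_le_of_le_one_right (hw i) ?_
  rw [← abs_mul_abs_self]
  exact mul_le_one₀ (hx i) (abs_nonneg _) (hx i)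

end Qmat

theorem setOf_dotProduct_mulVec_le_sq_subset_smul {m : Type*} [Fintype m]
    {Q : Matrix m m ℝ} (hQ : Q.PosDef) {c : ℝ} (hc : 0 ≤ c) :
    {x | x ⬝ᵥ (Q *ᵥ x) ≤ c ^ 2} ⊆ c • {x | x ⬝ᵥ (Q *ᵥ x) ≤ 1} := by
  intro x hx
  rcases hc.eq_or_lt with rfl | hc
  · obtain rfl : x = 0 := by
      by_contra hx0
      have := hQ.dotProduct_mulVec_pos hx0
      simp only [star_trivial, Set.mem_ofPred_eq] at this hx
      linarith
    exact ⟨0, by simp, by simp⟩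
  · rw [Set.mem_smul_set_iff_inv_smul_mem₀ hc.ne', Set.mem_ofPred_eq, mulVec_smul,
      dotProduct_smul, smul_dotProduct, smul_eq_mul, smul_eq_mul, ← mul_assoc, ← sq,
      inv_pow, inv_mul_le_one₀ (by positivity)]
    exact hx

theorem approx_john_ellipsoid_good_rounding_general
    (n d : ℕ) (A : Matrix (Fin n) (Fin d) ℝ)
    (ε : ℝ) (w : Fin n → ℝ) (hw : ∀ i, 0 ≤ w i)
    (hsum : (∑ i : Fin n, w i) = (d : ℝ)) (hQ : (Qmat A w).PosDef)
    (happrox : ∀ j : Fin n, A j ⬝ᵥ ((Qmat A w)⁻¹ *ᵥ A j) ≤ 1 + ε) :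
    (1 / Real.sqrt (1 + ε)) • {x : Fin d → ℝ | x ⬝ᵥ (Qmat A w *ᵥ x) ≤ 1} ⊆
        {x : Fin d → ℝ | ∀ i : Fin n, |A i ⬝ᵥ x| ≤ 1} ∧
      {x : Fin d → ℝ | ∀ i : Fin n, |A i ⬝ᵥ x| ≤ 1} ⊆
        Real.sqrt d • {x : Fin d → ℝ | x ⬝ᵥ (Qmat A w *ᵥ x) ≤ 1} := by
  constructor
  · rintro _ ⟨x, hx, rfl⟩ j
    have hxj : |A j ⬝ᵥ x| ≤ √(1 + ε) := by
      refine Real.abs_le_sqrt ((sq_dotProduct_le_mul_dotProduct_inv_mulVec A hw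
        hQ.det_pos.ne'.isUnit (A j) x).trans ?_)
      have hinv_nonneg : 0 ≤ A j ⬝ᵥ ((Qmat A w)⁻¹ *ᵥ A j) := by
        simpa only [star_trivial] using (posSemidef_Qmat A hw).inv.dotProduct_mulVec_nonneg (A j)
      simpa only [one_mul] using mul_le_mul hx (happrox j) hinv_nonneg zero_le_one
    rw [dotProduct_smul, smul_eq_mul, abs_mul, abs_of_nonneg (by positivity)]
    calc 1 / √(1 + ε) * |A j ⬝ᵥ x| ≤ 1 / √(1 + ε) * √(1 + ε) := by gcongr
      _ ≤ 1 := by rw [one_div]; exact inv_mul_le_one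
  · intro x hx
    refine setOf_dotProduct_mulVec_le_sq_subset_smul hQ (Real.sqrt_nonneg d) ?_
    rw [Set.mem_ofPred_eq, Real.sq_sqrt (Nat.cast_nonneg d), ← hsum]
    exact dotProduct_Qmat_mulVec_self_le_sum A hw hx

/-- A `(1+ε)`-approximate John ellipsoid solution gives a good rounding:
`(1/√(1+ε))·E ⊆ P ⊆ √d·E`. -/
theorem approx_john_ellipsoid_good_rounding
    (n d : ℕ) (A : Matrix (Fin n) (Fin d) ℝ) (hrank : A.rank = d)
    (ε : ℝ) (hε : 0 ≤ ε) (w : Fin n → ℝ) (hw : ∀ i, 0 ≤ w i)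
    (hsum : (∑ i : Fin n, w i) = (d : ℝ)) (hQ : (Qmat A w).PosDef)
    (happrox : ∀ j : Fin n, A j ⬝ᵥ ((Qmat A w)⁻¹ *ᵥ A j) ≤ 1 + ε) :
    (1 / Real.sqrt (1 + ε)) • {x : Fin d → ℝ | x ⬝ᵥ (Qmat A w *ᵥ x) ≤ 1} ⊆
        {x : Fin d → ℝ | ∀ i : Fin n, |A i ⬝ᵥ x| ≤ 1} ∧
      {x : Fin d → ℝ | ∀ i : Fin n, |A i ⬝ᵥ x| ≤ 1} ⊆
        Real.sqrt d • {x : Fin d → ℝ | x ⬝ᵥ (Qmat A w *ᵥ x) ≤ 1} :=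
  approx_john_ellipsoid_good_rounding_general n d A ε w hw hsum hQ happrox
end

section
/- Let n > d ≥ 1, ε₀ ≥ 0, and let w_1,…,w_T ∈ ℝ^n be vectors with strictly positive entries such that w_{1,i} = d/n for all i, and such that for every k ∈ {1,…,T−1} and every i ∈ [n] one has w_{k,i}·σ_i(w_k) ≤ (1+ε₀)·w_{k+1,i}. Let u = (1/T)·Σ_{k=1}^T w_k. Then for every i ∈ [n], φ_i(u) ≤ (1/T)·log(n/d) + ε₀. -/
open Matrix Finset

lemma dot_sum_vecMulVec {n d : ℕ} (A : Matrix (Fin n) (Fin d) ℝ) (v : Fin n → ℝ)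
    (x y : Fin d → ℝ) :
    x ⬝ᵥ ((∑ j : Fin n, v j • vecMulVec (A j) (A j)) *ᵥ y)
      = ∑ j : Fin n, v j * ((A j ⬝ᵥ x) * (A j ⬝ᵥ y)) := by
  simp only [dotProduct, mulVec, Matrix.sum_apply, Matrix.smul_apply, vecMulVec_apply,
    smul_eq_mul, Finset.mul_sum, Finset.sum_mul]
  rw [show (∑ p : Fin d, ∑ q : Fin d, ∑ j : Fin n, x p * (v j * (A j p * A j q) * y q))
      = ∑ p : Fin d, ∑ j : Fin n, ∑ q : Fin d, x p * (v j * (A j p * A j q) * y q) from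
    Finset.sum_congr rfl fun p _ => Finset.sum_comm]
  rw [Finset.sum_comm]
  refine Finset.sum_congr rfl fun j _ => ?_
  rw [Finset.sum_comm]
  refine Finset.sum_congr rfl fun q _ => ?_
  refine Finset.sum_congr rfl fun p _ => ?_
  ring

lemma mulVec_inj_of_rank {n d : ℕ} (A : Matrix (Fin n) (Fin d) ℝ) (hrank : A.rank = d)
    {x : Fin d → ℝ} (hx : A *ᵥ x = 0) : x = 0 := by
  have h1 : LinearMap.ker A.mulVecLin = ⊥ := by
    have h2 := LinearMap.finrank_range_add_finrank_ker A.mulVecLin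
    rw [Matrix.rank] at hrank
    rw [hrank] at h2
    simp only [Module.finrank_pi, Fintype.card_fin] at h2
    have : Module.finrank ℝ (LinearMap.ker A.mulVecLin) = 0 := by omega
    exact Submodule.finrank_eq_zero.mp this
  have : x ∈ LinearMap.ker A.mulVecLin := by simpa [Matrix.mulVecLin_apply] using hx
  simpa [h1] using this

lemma posDef_sum_vecMulVec {n d : ℕ} (A : Matrix (Fin n) (Fin d) ℝ) (hrank : A.rank = d)
    (v : Fin n → ℝ) (hv : ∀ j, 0 < v j) :
    (∑ j : Fin n, v j • vecMulVec (A j) (A j)).PosDef := by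
  refine Matrix.PosDef.of_dotProduct_mulVec_pos ?_ ?_
  · unfold Matrix.IsHermitian
    ext p q
    simp [conjTranspose_apply, Matrix.sum_apply, vecMulVec_apply, mul_comm]
  · intro x hx
    rw [star_trivial, dot_sum_vecMulVec]
    have hnn : ∀ j ∈ Finset.univ (α := Fin n), 0 ≤ v j * ((A j ⬝ᵥ x) * (A j ⬝ᵥ x)) :=
      fun j _ => mul_nonneg (hv j).le (mul_self_nonneg _)
    have hex : ∃ j, A j ⬝ᵥ x ≠ 0 := by
      by_contra hc
      push_neg at hc
      apply hx
      apply mulVec_inj_of_rank A hrank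
      ext j
      simpa [mulVec] using hc j
    obtain ⟨j0, hj0⟩ := hex
    exact Finset.sum_pos' hnn ⟨j0, Finset.mem_univ j0,
      mul_pos (hv j0) (mul_self_pos.mpr hj0)⟩

/-- Telescoping lemma: if `w₁ = (d/n)·𝟏` and the iterates satisfy the approximate fixed point
inequality `w_{k,i}·σᵢ(w_k) ≤ (1+ε₀)·w_{k+1,i}`, then the average `u` of the iterates
satisfies `φᵢ(u) = log σᵢ(u) ≤ (1/T)·log(n/d) + ε₀` for every `i`.
(The iterates are indexed by `k ∈ {0, …, T−1}` here.) -/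
theorem telescoping_approximate_iterates
    (n d T : ℕ) (hd : 1 ≤ d) (hdn : d < n) (hT : 0 < T)
    (A : Matrix (Fin n) (Fin d) ℝ) (hrank : A.rank = d) (ha : ∀ i : Fin n, A i ≠ 0)
    (ε₀ : ℝ) (hε₀ : 0 ≤ ε₀)
    (w : ℕ → Fin n → ℝ)
    (hpos : ∀ k, k < T → ∀ i, 0 < w k i)
    (hinit : ∀ i, w 0 i = (d : ℝ) / n)
    (hrec : ∀ k, k + 1 < T → ∀ i, w k i * sigmaFn A (w k) i ≤ (1 + ε₀) * w (k + 1) i)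
    (u : Fin n → ℝ) (hu : u = fun i => (1 / (T : ℝ)) * ∑ k ∈ Finset.range T, w k i) :
    ∀ i : Fin n, Real.log (sigmaFn A u i) ≤
      (1 / (T : ℝ)) * Real.log ((n : ℝ) / d) + ε₀ := by
  intro i
  have hTpos : (0:ℝ) < T := Nat.cast_pos.mpr hT
  set M : (Fin n → ℝ) → Matrix (Fin d) (Fin d) ℝ :=
    fun v => ∑ j : Fin n, v j • vecMulVec (A j) (A j) with hM
  have hupos : ∀ j, 0 < u j := by
    intro j
    rw [hu]
    exact mul_pos (by positivity)
      (Finset.sum_pos (fun k hk => hpos k (Finset.mem_range.mp hk) j)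
        ⟨0, Finset.mem_range.mpr hT⟩)
  have hMu : (M u).PosDef := posDef_sum_vecMulVec A hrank u hupos
  have hMudet : IsUnit (M u).det := isUnit_iff_ne_zero.mpr hMu.det_pos.ne'
  set x' : Fin d → ℝ := (M u)⁻¹ *ᵥ A i with hx'
  have hs_def : sigmaFn A u i = A i ⬝ᵥ x' := rfl
  set s := A i ⬝ᵥ x' with hs
  have hspos : 0 < s := by
    have := hMu.inv.dotProduct_mulVec_pos (ha i)
    rwa [star_trivial] at this
  have hx'ne : x' ≠ 0 := by
    intro h
    rw [hs, h, dotProduct_zero] at hspos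
    exact lt_irrefl 0 hspos
  have hMux' : (M u) *ᵥ x' = A i := by
    rw [hx', Matrix.mulVec_mulVec, Matrix.mul_nonsing_inv _ hMudet, Matrix.one_mulVec]
  set q : ℕ → ℝ := fun k => ∑ j, w k j * ((A j ⬝ᵥ x') * (A j ⬝ᵥ x')) with hq
  have hqpos : ∀ k < T, 0 < q k := by
    intro k hk
    have := (posDef_sum_vecMulVec A hrank (w k) (hpos k hk)).dotProduct_mulVec_pos hx'ne
    rwa [star_trivial, dot_sum_vecMulVec] at this
  have havg : s = (1/(T:ℝ)) * ∑ k ∈ Finset.range T, q k := by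
    have h1 : s = x' ⬝ᵥ ((M u) *ᵥ x') := by
      rw [hMux', dotProduct_comm]
    rw [h1, hM, dot_sum_vecMulVec, hq]
    rw [Finset.sum_comm]
    rw [Finset.mul_sum]
    refine Finset.sum_congr rfl fun j _ => ?_
    rw [hu]
    simp only
    rw [mul_assoc, Finset.sum_mul]
  set σ : ℕ → ℝ := fun k => sigmaFn A (w k) i with hσ
  have hCS : ∀ k, k < T → s^2 ≤ q k * σ k ∧ w k i * σ k ≤ 1 := by
    intro k hk
    have hMk : (M (w k)).PosDef := posDef_sum_vecMulVec A hrank (w k) (hpos k hk)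
    have hdetk : IsUnit (M (w k)).det := isUnit_iff_ne_zero.mpr hMk.det_pos.ne'
    set y : Fin d → ℝ := (M (w k))⁻¹ *ᵥ A i with hy
    have hMy : (M (w k)) *ᵥ y = A i := by
      rw [hy, Matrix.mulVec_mulVec, Matrix.mul_nonsing_inv _ hdetk, Matrix.one_mulVec]
    have hσy : σ k = ∑ j, w k j * ((A j ⬝ᵥ y) * (A j ⬝ᵥ y)) := by
      have h2 : σ k = y ⬝ᵥ ((M (w k)) *ᵥ y) := by
        rw [hMy, dotProduct_comm]
        rfl
      rw [h2, hM, dot_sum_vecMulVec]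
    have hsxy : s = ∑ j, w k j * ((A j ⬝ᵥ x') * (A j ⬝ᵥ y)) := by
      have h3 : x' ⬝ᵥ ((M (w k)) *ᵥ y) = ∑ j, w k j * ((A j ⬝ᵥ x') * (A j ⬝ᵥ y)) :=
        dot_sum_vecMulVec A (w k) x' y
      rw [← h3, hMy, hs]
      exact dotProduct_comm _ _
    have hAiy : A i ⬝ᵥ y = σ k := rfl
    have hcs1 : s^2 ≤ q k * σ k := by
      rw [hsxy, hσy, hq]
      exact sum_sq_le_sum_mul_sum_of_sq_eq_mul _
        (fun j _ => mul_nonneg (hpos k hk j).le (mul_self_nonneg _))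
        (fun j _ => mul_nonneg (hpos k hk j).le (mul_self_nonneg _))
        (fun j _ => by ring)
    have hσposk : 0 < σ k := by
      nlinarith [hqpos k hk, mul_pos hspos hspos]
    refine ⟨hcs1, ?_⟩
    have hterm : w k i * ((A i ⬝ᵥ y) * (A i ⬝ᵥ y)) ≤ σ k := by
      rw [hσy]
      exact Finset.single_le_sum
        (f := fun j => w k j * ((A j ⬝ᵥ y) * (A j ⬝ᵥ y)))
        (fun j _ => mul_nonneg (hpos k hk j).le (mul_self_nonneg _)) (Finset.mem_univ i)
    rw [hAiy] at hterm
    nlinarith [hpos k hk i]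
  have hσpos : ∀ k, k < T → 0 < σ k := by
    intro k hk
    have h1 := (hCS k hk).1
    nlinarith [hqpos k hk, hspos]
  -- Jensen step
  have hjensen : Real.log s ≤ (1/(T:ℝ)) * ∑ k ∈ Finset.range T, Real.log (σ k) := by
    have hconc : ConcaveOn ℝ (Set.Ioi 0) Real.log := strictConcaveOn_log_Ioi.concaveOn
    have hw0 : ∀ k ∈ Finset.range T, (0:ℝ) ≤ 1/(T:ℝ) := fun _ _ => by positivity
    have hw1 : ∑ _k ∈ Finset.range T, (1/(T:ℝ)) = 1 := by
      rw [Finset.sum_const, Finset.card_range, nsmul_eq_mul]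
      field_simp
    have hmem : ∀ k ∈ Finset.range T, (σ k)⁻¹ ∈ Set.Ioi (0:ℝ) :=
      fun k hk => Set.mem_Ioi.mpr (inv_pos.mpr (hσpos k (Finset.mem_range.mp hk)))
    have hJ := hconc.le_map_sum hw0 hw1 hmem
    have hsumpos : 0 < ∑ k ∈ Finset.range T, (1/(T:ℝ)) • (σ k)⁻¹ := by
      refine Finset.sum_pos (fun k hk => ?_) ⟨0, Finset.mem_range.mpr hT⟩
      have := hσpos k (Finset.mem_range.mp hk)
      rw [smul_eq_mul]
      positivity
    have hsum_le : ∑ k ∈ Finset.range T, (1/(T:ℝ)) • (σ k)⁻¹ ≤ s⁻¹ := by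
      have h5 : ∀ k ∈ Finset.range T, (1/(T:ℝ)) • (σ k)⁻¹ ≤ (1/(T:ℝ)) * (q k / s^2) := by
        intro k hk
        have hk' := Finset.mem_range.mp hk
        rw [smul_eq_mul]
        refine mul_le_mul_of_nonneg_left ?_ (by positivity)
        rw [le_div_iff₀ (pow_pos hspos 2), inv_mul_le_iff₀ (hσpos k hk'), mul_comm]
        exact (hCS k hk').1
      calc ∑ k ∈ Finset.range T, (1/(T:ℝ)) • (σ k)⁻¹
          ≤ ∑ k ∈ Finset.range T, (1/(T:ℝ)) * (q k / s^2) := Finset.sum_le_sum h5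
        _ = ((1/(T:ℝ)) * ∑ k ∈ Finset.range T, q k) / s^2 := by
            rw [Finset.mul_sum, Finset.sum_div]
            exact Finset.sum_congr rfl fun k _ => by ring
        _ = s / s^2 := by rw [← havg]
        _ = s⁻¹ := by
            rw [sq]
            field_simp
    have h6 : ∑ k ∈ Finset.range T, (1/(T:ℝ)) • Real.log ((σ k)⁻¹) ≤ - Real.log s := by
      refine le_trans hJ ?_
      rw [← Real.log_inv]
      exact Real.log_le_log hsumpos hsum_le
    have h7 : ∑ k ∈ Finset.range T, (1/(T:ℝ)) • Real.log ((σ k)⁻¹)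
        = -((1/(T:ℝ)) * ∑ k ∈ Finset.range T, Real.log (σ k)) := by
      rw [Finset.mul_sum, ← Finset.sum_neg_distrib]
      exact Finset.sum_congr rfl fun k _ => by rw [smul_eq_mul, Real.log_inv]; ring
    rw [h7] at h6
    linarith
  -- telescoping
  have htel : ∑ k ∈ Finset.range T, Real.log (σ k) ≤
      Real.log ((n:ℝ)/d) + ((T:ℝ) - 1) * Real.log (1+ε₀) := by
    have hT1 : T - 1 + 1 = T := Nat.succ_pred_eq_of_pos hT
    have hsplit : ∑ k ∈ Finset.range T, Real.log (σ k)
        = ∑ k ∈ Finset.range (T-1), Real.log (σ k) + Real.log (σ (T-1)) := by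
      conv_lhs => rw [← hT1]
      rw [Finset.sum_range_succ]
    have hstep : ∀ k ∈ Finset.range (T-1), Real.log (σ k)
        ≤ Real.log (1+ε₀) + (Real.log (w (k+1) i) - Real.log (w k i)) := by
      intro k hk
      have hkr := Finset.mem_range.mp hk
      have hk' : k + 1 < T := by omega
      have hkT : k < T := by omega
      have h1 := hrec k hk' i
      have hwk := hpos k hkT i
      have hwk1 := hpos (k+1) hk' i
      have hσk := hσpos k hkT
      have h2 : Real.log (w k i * σ k) ≤ Real.log ((1+ε₀) * w (k+1) i) :=
        Real.log_le_log (mul_pos hwk hσk) h1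
      rw [Real.log_mul hwk.ne' hσk.ne',
        Real.log_mul (by linarith : (1:ℝ)+ε₀ ≠ 0) hwk1.ne'] at h2
      linarith
    have hsum1 : ∑ k ∈ Finset.range (T-1), Real.log (σ k)
        ≤ ((T-1 : ℕ) : ℝ) * Real.log (1+ε₀)
          + (Real.log (w (T-1) i) - Real.log (w 0 i)) := by
      calc ∑ k ∈ Finset.range (T-1), Real.log (σ k)
          ≤ ∑ k ∈ Finset.range (T-1),
              (Real.log (1+ε₀) + (Real.log (w (k+1) i) - Real.log (w k i))) :=
            Finset.sum_le_sum hstep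
        _ = ((T-1 : ℕ) : ℝ) * Real.log (1+ε₀)
            + (Real.log (w (T-1) i) - Real.log (w 0 i)) := by
            rw [Finset.sum_add_distrib, Finset.sum_const, Finset.card_range,
              Finset.sum_range_sub (fun k => Real.log (w k i)), nsmul_eq_mul]
    have hTm1 : T - 1 < T := by omega
    have hlast : Real.log (σ (T-1)) ≤ - Real.log (w (T-1) i) := by
      have h1 := (hCS (T-1) hTm1).2
      have hw' := hpos (T-1) hTm1 i
      have hσ' := hσpos (T-1) hTm1
      have h2 : Real.log (w (T-1) i * σ (T-1)) ≤ 0 := by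
        rw [← Real.log_one]
        exact Real.log_le_log (mul_pos hw' hσ') h1
      rw [Real.log_mul hw'.ne' hσ'.ne'] at h2
      linarith
    have hw0log : Real.log (w 0 i) = - Real.log ((n:ℝ)/d) := by
      rw [hinit i]
      have hd0 : ((d:ℝ)) ≠ 0 := by positivity
      have hn0 : ((n:ℝ)) ≠ 0 := by
        have : 0 < n := by omega
        positivity
      rw [Real.log_div hd0 hn0, Real.log_div hn0 hd0]
      ring
    have hcast : ((T-1 : ℕ) : ℝ) ≤ (T:ℝ) - 1 := by
      rw [Nat.cast_sub hT]
      simp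
    have hlogε : 0 ≤ Real.log (1+ε₀) := Real.log_nonneg (by linarith)
    have hterm2 : ((T-1 : ℕ) : ℝ) * Real.log (1+ε₀) ≤ ((T:ℝ) - 1) * Real.log (1+ε₀) :=
      mul_le_mul_of_nonneg_right hcast hlogε
    rw [hsplit]
    calc ∑ k ∈ Finset.range (T-1), Real.log (σ k) + Real.log (σ (T-1))
        ≤ (((T-1 : ℕ) : ℝ) * Real.log (1+ε₀)
            + (Real.log (w (T-1) i) - Real.log (w 0 i))) + (- Real.log (w (T-1) i)) := by
          exact add_le_add hsum1 hlast
      _ = ((T-1 : ℕ) : ℝ) * Real.log (1+ε₀) - Real.log (w 0 i) := by ring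
      _ = ((T-1 : ℕ) : ℝ) * Real.log (1+ε₀) + Real.log ((n:ℝ)/d) := by
          rw [hw0log]; ring
      _ ≤ Real.log ((n:ℝ)/d) + ((T:ℝ) - 1) * Real.log (1+ε₀) := by linarith
  -- final arithmetic
  have hlog1 : Real.log (1+ε₀) ≤ ε₀ := by
    have := Real.log_le_sub_one_of_pos (by linarith : (0:ℝ) < 1+ε₀)
    linarith
  have hlog0 : 0 ≤ Real.log (1+ε₀) := Real.log_nonneg (by linarith)
  rw [hs_def]
  calc Real.log s ≤ (1/(T:ℝ)) * ∑ k ∈ Finset.range T, Real.log (σ k) := hjensen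
    _ ≤ (1/(T:ℝ)) * (Real.log ((n:ℝ)/d) + ((T:ℝ) - 1) * Real.log (1+ε₀)) := by
        apply mul_le_mul_of_nonneg_left htel (by positivity)
    _ ≤ (1/(T:ℝ)) * Real.log ((n:ℝ)/d) + ε₀ := by
        rw [mul_add]
        have h2 : (1/(T:ℝ)) * (((T:ℝ) - 1) * Real.log (1+ε₀)) ≤ ε₀ := by
          have h3 : (1/(T:ℝ)) * ((T:ℝ) - 1) ≤ 1 := by
            rw [div_mul_eq_mul_div, one_mul, div_le_one hTpos]
            linarith
          calc (1/(T:ℝ)) * (((T:ℝ) - 1) * Real.log (1+ε₀))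
              = ((1/(T:ℝ)) * ((T:ℝ) - 1)) * Real.log (1+ε₀) := by ring
            _ ≤ 1 * Real.log (1+ε₀) := by
                apply mul_le_mul_of_nonneg_right h3 hlog0
            _ = Real.log (1+ε₀) := one_mul _
            _ ≤ ε₀ := hlog1
        linarith
end

section
/- Let ε ∈ (0,1), n > d ≥ 1, and let T be a positive integer with T ≥ 1000·ε⁻¹·log(n/d). Define w_1,…,w_T ∈ ℝ^n by w_{1,i} = d/n and w_{k+1,i} = w_{k,i}·σ_i(w_k) for k ∈ {1,…,T−1}, and set u = (1/T)·Σ_{k=1}^T w_k. Then σ_i(u) ≤ 1+ε for every i ∈ [n], and Σ_{i=1}^n u_i = d. -/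
open Matrix Finset

namespace JohnAux

variable {n d : ℕ}

/-- The weighted Gram matrix `M(v) = Σⱼ vⱼ aⱼ aⱼᵀ`. -/
noncomputable def M (A : Matrix (Fin n) (Fin d) ℝ) (v : Fin n → ℝ) : Matrix (Fin d) (Fin d) ℝ :=
  ∑ j : Fin n, v j • vecMulVec (A j) (A j)

lemma sigmaFn_def (A : Matrix (Fin n) (Fin d) ℝ) (v : Fin n → ℝ) (i : Fin n) :
    sigmaFn A v i = A i ⬝ᵥ ((M A v)⁻¹ *ᵥ A i) := rfl

lemma quadform (A : Matrix (Fin n) (Fin d) ℝ) (v : Fin n → ℝ) (y x : Fin d → ℝ) :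
    y ⬝ᵥ (M A v *ᵥ x) = ∑ j : Fin n, v j * ((A j ⬝ᵥ y) * (A j ⬝ᵥ x)) := by
  simp only [M, dotProduct, mulVec, Matrix.sum_apply, Matrix.smul_apply, Pi.smul_apply,
    smul_eq_mul, vecMulVec_apply, Finset.mul_sum, Finset.sum_mul]
  conv_lhs => enter [2, p]; rw [Finset.sum_comm]
  rw [Finset.sum_comm]
  refine Finset.sum_congr rfl fun j _ => ?_
  rw [Finset.sum_comm]
  refine Finset.sum_congr rfl fun q _ => ?_
  refine Finset.sum_congr rfl fun p _ => ?_
  ring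

lemma exists_dot_ne (A : Matrix (Fin n) (Fin d) ℝ) (hrank : A.rank = d)
    {x : Fin d → ℝ} (hx : x ≠ 0) : ∃ j, A j ⬝ᵥ x ≠ 0 := by
  by_contra hc
  push_neg at hc
  have hker : x ∈ LinearMap.ker A.mulVecLin := by
    simp only [LinearMap.mem_ker, Matrix.mulVecLin_apply]
    ext j
    exact hc j
  have hrn := LinearMap.finrank_range_add_finrank_ker (Matrix.mulVecLin A)
  have hfd : Module.finrank ℝ (Fin d → ℝ) = d := by simp
  rw [hfd] at hrn
  have hr : Module.finrank ℝ (LinearMap.range A.mulVecLin) = d := hrank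
  rw [hr] at hrn
  have hk0 : Module.finrank ℝ (LinearMap.ker A.mulVecLin) = 0 := by omega
  have : LinearMap.ker A.mulVecLin = ⊥ := Submodule.finrank_eq_zero.mp hk0
  rw [this] at hker
  exact hx (by simpa using hker)

lemma M_posDef (A : Matrix (Fin n) (Fin d) ℝ) (hrank : A.rank = d)
    {v : Fin n → ℝ} (hv : ∀ i, 0 < v i) : (M A v).PosDef := by
  refine Matrix.PosDef.of_dotProduct_mulVec_pos ?_ ?_
  · show (M A v)ᴴ = M A v
    ext p q
    simp [M, Matrix.conjTranspose_apply, Matrix.sum_apply, Matrix.smul_apply,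
      vecMulVec_apply, mul_comm, mul_left_comm]
  · intro x hx
    have hst : star x = x := funext fun i => rfl
    rw [hst, quadform]
    obtain ⟨j, hj⟩ := exists_dot_ne A hrank hx
    refine Finset.sum_pos' (fun j _ => ?_) ⟨j, Finset.mem_univ j, ?_⟩
    · have := (hv j).le
      nlinarith [sq_nonneg (A j ⬝ᵥ x)]
    · exact mul_pos (hv j) (mul_self_pos.mpr hj)

variable (A : Matrix (Fin n) (Fin d) ℝ) (hrank : A.rank = d)
  {v : Fin n → ℝ} (hv : ∀ i, 0 < v i)

include hrank hv

lemma det_isUnit : IsUnit (M A v).det := ((M_posDef A hrank hv).det_pos.ne').isUnit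

lemma N_mulVec_inv (i : Fin n) : M A v *ᵥ ((M A v)⁻¹ *ᵥ A i) = A i := by
  rw [Matrix.mulVec_mulVec, Matrix.mul_nonsing_inv _ (det_isUnit A hrank hv), Matrix.one_mulVec]

lemma sig_pos (ha : ∀ i : Fin n, A i ≠ 0) (i : Fin n) : 0 < sigmaFn A v i := by
  have h := ((M_posDef A hrank hv).inv).dotProduct_mulVec_pos (ha i)
  have hst : star (A i) = A i := funext fun _ => rfl
  rw [hst] at h
  exact h

lemma x_dot_Nx (i : Fin n) :
    ∑ j : Fin n, v j * ((A j ⬝ᵥ ((M A v)⁻¹ *ᵥ A i)) * (A j ⬝ᵥ ((M A v)⁻¹ *ᵥ A i)))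
      = sigmaFn A v i := by
  rw [← quadform, N_mulVec_inv A hrank hv, dotProduct_comm, sigmaFn_def]

lemma y_dot_Nx (i : Fin n) (y : Fin d → ℝ) :
    ∑ j : Fin n, v j * ((A j ⬝ᵥ y) * (A j ⬝ᵥ ((M A v)⁻¹ *ᵥ A i))) = y ⬝ᵥ A i := by
  rw [← quadform, N_mulVec_inv A hrank hv]

lemma vsig_le_one (ha : ∀ i : Fin n, A i ≠ 0) (i : Fin n) : v i * sigmaFn A v i ≤ 1 := by
  have hs := sig_pos A hrank hv ha i
  have hkey := x_dot_Nx A hrank hv i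
  have hsingle : v i * ((A i ⬝ᵥ ((M A v)⁻¹ *ᵥ A i)) * (A i ⬝ᵥ ((M A v)⁻¹ *ᵥ A i)))
      ≤ ∑ j : Fin n, v j * ((A j ⬝ᵥ ((M A v)⁻¹ *ᵥ A i)) * (A j ⬝ᵥ ((M A v)⁻¹ *ᵥ A i))) := by
    refine Finset.single_le_sum
      (f := fun j => v j * ((A j ⬝ᵥ ((M A v)⁻¹ *ᵥ A i)) * (A j ⬝ᵥ ((M A v)⁻¹ *ᵥ A i))))
      (fun j _ => ?_) (Finset.mem_univ i)
    exact mul_nonneg (hv j).le (mul_self_nonneg _)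
  rw [hkey] at hsingle
  have hAx : A i ⬝ᵥ ((M A v)⁻¹ *ᵥ A i) = sigmaFn A v i := rfl
  rw [hAx] at hsingle
  nlinarith

lemma cs (i : Fin n) (y : Fin d → ℝ) :
    (y ⬝ᵥ A i) * (y ⬝ᵥ A i) ≤ sigmaFn A v i * ∑ j : Fin n, v j * ((A j ⬝ᵥ y) * (A j ⬝ᵥ y)) := by
  set x := (M A v)⁻¹ *ᵥ A i with hx
  have hquad : ∀ t : ℝ, 0 ≤ (sigmaFn A v i) * (t * t) + (2 * (y ⬝ᵥ A i)) * t
      + ∑ j : Fin n, v j * ((A j ⬝ᵥ y) * (A j ⬝ᵥ y)) := by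
    intro t
    have hexp : (sigmaFn A v i) * (t * t) + (2 * (y ⬝ᵥ A i)) * t
        + ∑ j : Fin n, v j * ((A j ⬝ᵥ y) * (A j ⬝ᵥ y))
        = ∑ j : Fin n, v j * ((A j ⬝ᵥ y + t * (A j ⬝ᵥ x)) * (A j ⬝ᵥ y + t * (A j ⬝ᵥ x))) := by
      rw [← x_dot_Nx A hrank hv i, ← y_dot_Nx A hrank hv i y]
      rw [Finset.sum_mul, Finset.mul_sum, Finset.sum_mul, ← Finset.sum_add_distrib,
        ← Finset.sum_add_distrib]
      refine Finset.sum_congr rfl fun j _ => ?_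
      ring
    rw [hexp]
    exact Finset.sum_nonneg fun j _ => mul_nonneg (hv j).le (mul_self_nonneg _)
  have hd := discrim_le_zero hquad
  rw [discrim] at hd
  nlinarith

omit hrank hv

lemma sum_vsig_trace (B N : Matrix (Fin d) (Fin d) ℝ) (v : Fin n → ℝ)
    (hN : N = ∑ j : Fin n, v j • vecMulVec (A j) (A j)) :
    ∑ i : Fin n, v i * (A i ⬝ᵥ (B *ᵥ A i)) = Matrix.trace (B * N) := by
  subst hN
  simp only [Matrix.trace, Matrix.diag_apply, Matrix.mul_apply, dotProduct, mulVec,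
    Matrix.sum_apply, Matrix.smul_apply, smul_eq_mul, vecMulVec_apply, Finset.mul_sum,
    Finset.sum_mul]
  rw [Finset.sum_comm]
  refine Finset.sum_congr rfl fun p _ => Finset.sum_congr rfl fun i _ =>
    Finset.sum_congr rfl fun q _ => by ring

include hrank hv

lemma sum_vsig : ∑ i : Fin n, v i * sigmaFn A v i = (d : ℝ) := by
  have h := sum_vsig_trace A ((M A v)⁻¹) (M A v) v rfl
  rw [Matrix.nonsing_inv_mul _ (det_isUnit A hrank hv), Matrix.trace_one] at h
  have : ∑ i : Fin n, v i * sigmaFn A v i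
      = ∑ i : Fin n, v i * (A i ⬝ᵥ ((M A v)⁻¹ *ᵥ A i)) := rfl
  rw [this, h]
  simp

end JohnAux

open JohnAux in
/-- Correctness of the exact fixed point iteration: with `w₁ = (d/n)·𝟏`,
`w_{k+1,i} = w_{k,i}·σᵢ(w_k)` and `T ≥ 1000·ε⁻¹·log(n/d)`, the average `u` of the first
`T` iterates satisfies `σᵢ(u) ≤ 1 + ε` for all `i` and `Σᵢ uᵢ = d`.
(The iterates are indexed by `k ∈ {0, …, T−1}` here.) -/
theorem exact_iteration_correctness
    (n d T : ℕ) (hd : 1 ≤ d) (hdn : d < n) (hT : 0 < T)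
    (A : Matrix (Fin n) (Fin d) ℝ) (hrank : A.rank = d) (ha : ∀ i : Fin n, A i ≠ 0)
    (ε : ℝ) (hε : ε ∈ Set.Ioo (0 : ℝ) 1)
    (hTbig : (T : ℝ) ≥ 1000 * ε⁻¹ * Real.log ((n : ℝ) / d))
    (w : ℕ → Fin n → ℝ)
    (hinit : ∀ i, w 0 i = (d : ℝ) / n)
    (hrec : ∀ k, k + 1 < T → ∀ i, w (k + 1) i = w k i * sigmaFn A (w k) i)
    (u : Fin n → ℝ) (hu : u = fun i => (1 / (T : ℝ)) * ∑ k ∈ Finset.range T, w k i) :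
    (∀ i : Fin n, sigmaFn A u i ≤ 1 + ε) ∧ (∑ i : Fin n, u i) = (d : ℝ) := by
  obtain ⟨hε0, hε1⟩ := hε
  have hd0 : (0 : ℝ) < d := by exact_mod_cast hd
  have hn0 : (0 : ℝ) < n := by
    have : 0 < n := lt_of_le_of_lt (Nat.zero_le d) hdn
    exact_mod_cast this
  have hT0 : (0 : ℝ) < T := by exact_mod_cast hT
  -- positivity of the iterates
  have hwpos : ∀ k, k < T → ∀ i, 0 < w k i := by
    intro k
    induction k with
    | zero => intro _ i; rw [hinit i]; positivity
    | succ k ih =>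
      intro hk i
      have hk' : k < T := Nat.lt_of_succ_lt hk
      rw [hrec k hk i]
      exact mul_pos (ih hk' i) (sig_pos A hrank (fun j => ih hk' j) ha i)
  have hupos : ∀ i, 0 < u i := by
    intro i
    rw [hu]
    have hsum : 0 < ∑ k ∈ Finset.range T, w k i :=
      Finset.sum_pos (fun k hk => hwpos k (Finset.mem_range.mp hk) i)
        ⟨0, Finset.mem_range.mpr hT⟩
    have h1T : (0 : ℝ) < 1 / T := by positivity
    exact mul_pos h1T hsum
  -- each iterate sums to `d`
  have hsumw : ∀ k, k < T → ∑ i : Fin n, w k i = (d : ℝ) := by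
    intro k
    induction k with
    | zero =>
      intro _
      simp only [hinit]
      rw [Finset.sum_const, Finset.card_univ, Fintype.card_fin, nsmul_eq_mul]
      field_simp
    | succ k ih =>
      intro hk
      have hk' : k < T := Nat.lt_of_succ_lt hk
      calc ∑ i : Fin n, w (k + 1) i = ∑ i : Fin n, w k i * sigmaFn A (w k) i :=
            Finset.sum_congr rfl fun i _ => hrec k hk i
        _ = (d : ℝ) := sum_vsig A hrank (fun j => hwpos k hk' j)
  have part2 : ∑ i : Fin n, u i = (d : ℝ) := by
    rw [hu]
    rw [← Finset.mul_sum, Finset.sum_comm]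
    rw [Finset.sum_congr rfl (fun k hk => hsumw k (Finset.mem_range.mp hk))]
    rw [Finset.sum_const, Finset.card_range, nsmul_eq_mul]
    field_simp
  refine ⟨fun i => ?_, part2⟩
  -- Part 1: fix `i`
  have hs : 0 < sigmaFn A u i := sig_pos A hrank hupos ha i
  set s : ℝ := sigmaFn A u i with hsdef
  set x : Fin d → ℝ := (M A u)⁻¹ *ᵥ A i with hxdef
  set y : Fin d → ℝ := s⁻¹ • x with hydef
  have hxA : A i ⬝ᵥ x = s := rfl
  have hyA : y ⬝ᵥ A i = 1 := by
    rw [hydef, smul_dotProduct, smul_eq_mul, dotProduct_comm, hxA, inv_mul_cancel₀ hs.ne']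
  -- per-step inequality from Cauchy–Schwarz
  have hinvle : ∀ k ∈ Finset.range T, (sigmaFn A (w k) i)⁻¹
      ≤ ∑ j : Fin n, w k j * ((A j ⬝ᵥ y) * (A j ⬝ᵥ y)) := by
    intro k hk
    have hwp : ∀ j, 0 < w k j := fun j => hwpos k (Finset.mem_range.mp hk) j
    have hcs := cs A hrank hwp i y
    rw [hyA, one_mul] at hcs
    have hσ : 0 < sigmaFn A (w k) i := sig_pos A hrank hwp ha i
    calc (sigmaFn A (w k) i)⁻¹ = (sigmaFn A (w k) i)⁻¹ * 1 := (mul_one _).symm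
      _ ≤ (sigmaFn A (w k) i)⁻¹
          * (sigmaFn A (w k) i * ∑ j : Fin n, w k j * ((A j ⬝ᵥ y) * (A j ⬝ᵥ y))) :=
          mul_le_mul_of_nonneg_left hcs (inv_pos.mpr hσ).le
      _ = ∑ j : Fin n, w k j * ((A j ⬝ᵥ y) * (A j ⬝ᵥ y)) := by
          field_simp
  -- the quadratic form of `u` at `y` equals `s⁻¹`
  have hQy : ∑ j : Fin n, u j * ((A j ⬝ᵥ y) * (A j ⬝ᵥ y)) = s⁻¹ := by
    have hAy : ∀ j, A j ⬝ᵥ y = s⁻¹ * (A j ⬝ᵥ x) := fun j => by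
      rw [hydef, dotProduct_smul, smul_eq_mul]
    have hx2 : ∑ j : Fin n, u j * ((A j ⬝ᵥ x) * (A j ⬝ᵥ x)) = s := x_dot_Nx A hrank hupos i
    calc ∑ j : Fin n, u j * ((A j ⬝ᵥ y) * (A j ⬝ᵥ y))
        = ∑ j : Fin n, s⁻¹ * s⁻¹ * (u j * ((A j ⬝ᵥ x) * (A j ⬝ᵥ x))) := by
          refine Finset.sum_congr rfl fun j _ => ?_
          rw [hAy j]; ring
      _ = s⁻¹ * s⁻¹ * ∑ j : Fin n, u j * ((A j ⬝ᵥ x) * (A j ⬝ᵥ x)) := by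
          rw [Finset.mul_sum]
      _ = s⁻¹ * s⁻¹ * s := by rw [hx2]
      _ = s⁻¹ := by field_simp
  -- sum of the inverse leverage values
  have hsum_inv : ∑ k ∈ Finset.range T, (sigmaFn A (w k) i)⁻¹ ≤ (T : ℝ) * s⁻¹ := by
    calc ∑ k ∈ Finset.range T, (sigmaFn A (w k) i)⁻¹
        ≤ ∑ k ∈ Finset.range T, ∑ j : Fin n, w k j * ((A j ⬝ᵥ y) * (A j ⬝ᵥ y)) :=
          Finset.sum_le_sum hinvle
      _ = ∑ j : Fin n, (∑ k ∈ Finset.range T, w k j) * ((A j ⬝ᵥ y) * (A j ⬝ᵥ y)) := by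
          rw [Finset.sum_comm]
          exact Finset.sum_congr rfl fun j _ => (Finset.sum_mul _ _ _).symm
      _ = ∑ j : Fin n, ((T : ℝ) * u j) * ((A j ⬝ᵥ y) * (A j ⬝ᵥ y)) := by
          refine Finset.sum_congr rfl fun j _ => ?_
          have : (T : ℝ) * u j = ∑ k ∈ Finset.range T, w k j := by
            rw [hu]; field_simp
          rw [← this]
      _ = (T : ℝ) * ∑ j : Fin n, u j * ((A j ⬝ᵥ y) * (A j ⬝ᵥ y)) := by
          rw [Finset.mul_sum]
          exact Finset.sum_congr rfl fun j _ => by ring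
      _ = (T : ℝ) * s⁻¹ := by rw [hQy]
  -- AM–GM
  have hσpos : ∀ k ∈ Finset.range T, 0 < sigmaFn A (w k) i :=
    fun k hk => sig_pos A hrank (fun j => hwpos k (Finset.mem_range.mp hk) j) ha i
  have hgm := Real.geom_mean_le_arith_mean_weighted (Finset.range T) (fun _ => (T : ℝ)⁻¹)
    (fun k => (sigmaFn A (w k) i)⁻¹) (fun _ _ => by positivity)
    (by rw [Finset.sum_const, Finset.card_range, nsmul_eq_mul]; field_simp)
    (fun k hk => (inv_pos.mpr (hσpos k hk)).le)
  set P : ℝ := ∏ k ∈ Finset.range T, sigmaFn A (w k) i with hPdef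
  have hP : 0 < P := Finset.prod_pos hσpos
  have hprodeq : ∏ k ∈ Finset.range T, ((sigmaFn A (w k) i)⁻¹) ^ ((T : ℝ)⁻¹)
      = (P ^ ((T : ℝ)⁻¹))⁻¹ := by
    rw [Real.finset_prod_rpow _ _ (fun k hk => (inv_pos.mpr (hσpos k hk)).le) _,
      Finset.prod_inv_distrib, Real.inv_rpow hP.le]
  have hrhs : ∑ k ∈ Finset.range T, (T : ℝ)⁻¹ * (sigmaFn A (w k) i)⁻¹ ≤ s⁻¹ := by
    rw [← Finset.mul_sum]
    calc (T : ℝ)⁻¹ * ∑ k ∈ Finset.range T, (sigmaFn A (w k) i)⁻¹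
        ≤ (T : ℝ)⁻¹ * ((T : ℝ) * s⁻¹) := mul_le_mul_of_nonneg_left hsum_inv (by positivity)
      _ = s⁻¹ := by field_simp
  have hsle : s ≤ P ^ ((T : ℝ)⁻¹) := by
    have h1 : (P ^ ((T : ℝ)⁻¹))⁻¹ ≤ s⁻¹ := by
      rw [← hprodeq]; exact hgm.trans hrhs
    have hPr : 0 < P ^ ((T : ℝ)⁻¹) := Real.rpow_pos_of_pos hP _
    exact (inv_le_inv₀ hPr hs).mp h1
  -- product bound : `P ≤ n/d`
  have hiter : ∀ m, m < T → w m i = w 0 i * ∏ k ∈ Finset.range m, sigmaFn A (w k) i := by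
    intro m
    induction m with
    | zero => intro _; simp
    | succ m ih =>
      intro hm
      rw [Finset.prod_range_succ, hrec m hm i, ih (Nat.lt_of_succ_lt hm), mul_assoc]
  have hPbound : P ≤ (n : ℝ) / d := by
    obtain ⟨S, rfl⟩ : ∃ S, T = S + 1 := ⟨T - 1, (Nat.succ_pred_eq_of_pos hT).symm⟩
    have hST : S < S + 1 := Nat.lt_succ_self S
    have h1 : P = (∏ k ∈ Finset.range S, sigmaFn A (w k) i) * sigmaFn A (w S) i := by
      rw [hPdef, Finset.prod_range_succ]
    have h2 : w S i = w 0 i * ∏ k ∈ Finset.range S, sigmaFn A (w k) i := hiter S hST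
    have h3 : w S i * sigmaFn A (w S) i ≤ 1 :=
      vsig_le_one A hrank (fun j => hwpos S hST j) ha i
    have hw0 : w 0 i = (d : ℝ) / n := hinit i
    have hw0pos : 0 < w 0 i := by rw [hw0]; positivity
    have h4 : ∏ k ∈ Finset.range S, sigmaFn A (w k) i = w S i / w 0 i := by
      rw [h2]; field_simp
    rw [h1, h4, hw0]
    have h5 : w S i / ((d : ℝ) / n) * sigmaFn A (w S) i
        = (w S i * sigmaFn A (w S) i) * ((n : ℝ) / d) := by
      field_simp
    rw [h5]
    calc (w S i * sigmaFn A (w S) i) * ((n : ℝ) / d) ≤ 1 * ((n : ℝ) / d) :=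
          mul_le_mul_of_nonneg_right h3 (by positivity)
      _ = (n : ℝ) / d := one_mul _
  -- final numeric bound
  have hnd1 : 1 < (n : ℝ) / d := (one_lt_div hd0).mpr (by exact_mod_cast hdn)
  have hL : 0 < Real.log ((n : ℝ) / d) := Real.log_pos hnd1
  have h4 : P ^ ((T : ℝ)⁻¹) ≤ ((n : ℝ) / d) ^ ((T : ℝ)⁻¹) :=
    Real.rpow_le_rpow hP.le hPbound (by positivity)
  have h5 : ((n : ℝ) / d) ^ ((T : ℝ)⁻¹)
      = Real.exp (Real.log ((n : ℝ) / d) * (T : ℝ)⁻¹) := Real.rpow_def_of_pos (by positivity) _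
  have h6 : Real.log ((n : ℝ) / d) * (T : ℝ)⁻¹ ≤ ε / 1000 := by
    have hεT : 1000 * Real.log ((n : ℝ) / d) ≤ ε * T := by
      have h := mul_le_mul_of_nonneg_left hTbig hε0.le
      calc 1000 * Real.log ((n : ℝ) / d)
          = ε * (1000 * ε⁻¹ * Real.log ((n : ℝ) / d)) := by field_simp
        _ ≤ ε * T := h
    rw [← div_eq_mul_inv, div_le_div_iff₀ hT0 (by norm_num : (0 : ℝ) < 1000)]
    linarith
  have h7 : Real.exp (Real.log ((n : ℝ) / d) * (T : ℝ)⁻¹) ≤ Real.exp (ε / 1000) :=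
    Real.exp_le_exp.mpr h6
  have h8 : Real.exp (ε / 1000) ≤ 1 + ε := by
    have ht1 : (1 : ℝ) - ε / 1000 ≤ Real.exp (-(ε / 1000)) := by
      have := Real.add_one_le_exp (-(ε / 1000)); linarith
    rw [Real.exp_neg] at ht1
    have hE := Real.exp_pos (ε / 1000)
    have h9 : Real.exp (ε / 1000) * (1 - ε / 1000) ≤ 1 := by
      have hmul := mul_le_mul_of_nonneg_left ht1 hE.le
      rwa [mul_inv_cancel₀ hE.ne'] at hmul
    have hpos : (0 : ℝ) < 1 - ε / 1000 := by linarith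
    have h10 : Real.exp (ε / 1000) ≤ 1 / (1 - ε / 1000) := by
      rw [le_div_iff₀ hpos]; exact h9
    have h11 : 1 / (1 - ε / 1000) ≤ 1 + ε := by
      rw [div_le_iff₀ hpos]; nlinarith
    linarith
  calc sigmaFn A u i = s := rfl
    _ ≤ P ^ ((T : ℝ)⁻¹) := hsle
    _ ≤ 1 + ε := by rw [h5] at h4; linarith
end
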